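/- arXiv:1808.10158 — 4 statements merged into one kernel-verified Lean document; each statement's English description precedes it below -/
import Mathlib

section
/- Let T > 0 and α > 0, let p : ℝ → ℝ be continuous on [0,T], and let μ, ν be finite Borel measures on the interval (0,T) that are mutually singular. Assume that for every pair (σ,τ) of mutually singular finite Borel measures on (0,T) one has (−∫ p dσ + ∫ p dτ) − (−∫ p dμ + ∫ p dν) ≤ α(σ((0,T)) + τ((0,T))) − α(μ((0,T)) + ν((0,T))). Then: (a) |p(t)| ≤ α for every t ∈ (0,T); (b) −∫ p dμ + ∫ p dν = α(μ((0,T)) + ν((0,T))); (c) μ({t ∈ (0,T) : p(t) ≠ −α}) = 0 and ν({t ∈ (0,T) : p(t) ≠ α}) = 0. -/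
/-!
The pairs of mutually singular finite measures concentrated on `s` form a cone on which the
penalized pairing `(σ, τ) ↦ -∫ p dσ + ∫ p dτ - α (σ(s) + τ(s))` is positively homogeneous, so its
maximum value, attained at `(μ, ν)`, is `0`. Testing against Dirac masses then gives `|p| ≤ α` on
`s`, and the vanishing maximum `-(∫ (α + p) dμ + ∫ (α - p) dν) = 0` of two nonnegative integrals
forces `p = -α` `μ`-a.e. and `p = α` `ν`-a.e.
-/

open MeasureTheory NNReal

theorem ContinuousOn.integrable_of_measure_compl_eq_zero {Y E : Type*} [TopologicalSpace Y]
    [T2Space Y] [MeasurableSpace Y] [OpensMeasurableSpace Y] [NormedAddCommGroup E] {f : Y → E}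
    {K : Set Y} {m : Measure Y} [IsFiniteMeasure m] (hf : ContinuousOn f K) (hK : IsCompact K)
    (hm : m Kᶜ = 0) : Integrable f m := by
  rw [← Measure.restrict_eq_self_of_ae_mem (mem_ae_iff.mpr hm)]
  exact hf.integrableOn_compact hK

variable {X : Type*} [MeasurableSpace X]

/-- For mutually singular `σ`, `τ` concentrated on `s` this is `⟨σ - τ, -p⟩ - α ‖σ - τ‖`, the
functional maximized by the optimal measure `v = μ - ν`. -/
noncomputable def penalizedPairing (p : X → ℝ) (α : ℝ) (s : Set X) (σ τ : Measure X) : ℝ :=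
  -(∫ t, p t ∂σ) + ∫ t, p t ∂τ - α * ((σ s).toReal + (τ s).toReal)

def singularPairs (s : Set X) : Set (Measure X × Measure X) :=
  {q | IsFiniteMeasure q.1 ∧ IsFiniteMeasure q.2 ∧ q.1 sᶜ = 0 ∧ q.2 sᶜ = 0 ∧ q.1 ⟂ₘ q.2}

section PenalizedPairing

variable {p : X → ℝ} {α : ℝ} {s : Set X}

@[simp]
theorem penalizedPairing_zero_zero : penalizedPairing p α s 0 0 = 0 := by
  simp [penalizedPairing]

theorem penalizedPairing_smul (c : ℝ≥0) (σ τ : Measure X) :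
    penalizedPairing p α s (c • σ) (c • τ) = c * penalizedPairing p α s σ τ := by
  rw [penalizedPairing, penalizedPairing, integral_smul_nnreal_measure,
    integral_smul_nnreal_measure]
  simp only [Measure.smul_apply, ENNReal.smul_def, smul_eq_mul, ENNReal.toReal_mul,
    ENNReal.coe_toReal, NNReal.smul_def]
  ring

theorem penalizedPairing_dirac_zero [MeasurableSingletonClass X] {t : X} (ht : t ∈ s) :
    penalizedPairing p α s (Measure.dirac t) 0 = -p t - α := by
  simp [penalizedPairing, integral_dirac, Measure.dirac_apply_of_mem ht]

theorem penalizedPairing_zero_dirac [MeasurableSingletonClass X] {t : X} (ht : t ∈ s) :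
    penalizedPairing p α s 0 (Measure.dirac t) = p t - α := by
  simp [penalizedPairing, integral_dirac, Measure.dirac_apply_of_mem ht]

theorem integral_const_of_measure_compl_eq_zero {m : Measure X} (hm : m sᶜ = 0) :
    ∫ _, α ∂m = α * (m s).toReal := by
  rw [integral_const, measureReal_def, ← measure_congr (ae_eq_univ.mpr hm), smul_eq_mul, mul_comm]

theorem penalizedPairing_eq_neg_integral_add_integral {σ τ : Measure X}
    [IsFiniteMeasure σ] [IsFiniteMeasure τ] (hσ : σ sᶜ = 0) (hτ : τ sᶜ = 0)
    (hpσ : Integrable p σ) (hpτ : Integrable p τ) :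
    penalizedPairing p α s σ τ = -(∫ t, (α + p t) ∂σ + ∫ t, (α - p t) ∂τ) := by
  rw [integral_add (integrable_const α) hpσ, integral_sub (integrable_const α) hpτ,
    integral_const_of_measure_compl_eq_zero hσ, integral_const_of_measure_compl_eq_zero hτ,
    penalizedPairing]
  ring

end PenalizedPairing

section SingularPairs

variable {s : Set X}

theorem zero_zero_mem_singularPairs : ((0 : Measure X), (0 : Measure X)) ∈ singularPairs s :=
  ⟨inferInstance, inferInstance, rfl, rfl, Measure.MutuallySingular.zero_left⟩

theorem smul_mem_singularPairs {μ ν : Measure X} (c : ℝ≥0) (h : (μ, ν) ∈ singularPairs s) :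
    (c • μ, c • ν) ∈ singularPairs s := by
  obtain ⟨_, _, hμ, hν, hμν⟩ := h
  exact ⟨inferInstance, inferInstance, by simp [hμ], by simp [hν],
    (hμν.smul_nnreal c).symm.smul_nnreal c |>.symm⟩

theorem dirac_zero_mem_singularPairs [MeasurableSingletonClass X] {t : X} (ht : t ∈ s) :
    (Measure.dirac t, (0 : Measure X)) ∈ singularPairs s :=
  ⟨inferInstance, inferInstance, by simp [ht], rfl,
    Measure.MutuallySingular.zero_right⟩

theorem zero_dirac_mem_singularPairs [MeasurableSingletonClass X] {t : X} (ht : t ∈ s) :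
    ((0 : Measure X), Measure.dirac t) ∈ singularPairs s :=
  ⟨inferInstance, inferInstance, rfl, by simp [ht],
    Measure.MutuallySingular.zero_left⟩

end SingularPairs

section MaximalPair

variable {p : X → ℝ} {α : ℝ} {s : Set X} {μ ν : Measure X}
  (hmax : IsMaxOn (fun q => penalizedPairing p α s q.1 q.2) (singularPairs s) (μ, ν))
include hmax

theorem penalizedPairing_eq_zero_of_isMaxOn (hμν : (μ, ν) ∈ singularPairs s) :
    penalizedPairing p α s μ ν = 0 := by
  have h_nonneg : penalizedPairing p α s 0 0 ≤ penalizedPairing p α s μ ν :=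
    hmax zero_zero_mem_singularPairs
  have h_double : penalizedPairing p α s ((2 : ℝ≥0) • μ) ((2 : ℝ≥0) • ν)
      ≤ penalizedPairing p α s μ ν :=
    hmax (smul_mem_singularPairs 2 hμν)
  rw [penalizedPairing_zero_zero] at h_nonneg
  rw [penalizedPairing_smul] at h_double
  push_cast at h_double
  linarith

theorem abs_le_of_isMaxOn_penalizedPairing [MeasurableSingletonClass X]
    (hμν : (μ, ν) ∈ singularPairs s) {t : X} (ht : t ∈ s) : |p t| ≤ α := by
  have hzero := penalizedPairing_eq_zero_of_isMaxOn hmax hμν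
  have h_dirac_zero : penalizedPairing p α s (Measure.dirac t) 0 ≤ penalizedPairing p α s μ ν :=
    hmax (dirac_zero_mem_singularPairs ht)
  have h_zero_dirac : penalizedPairing p α s 0 (Measure.dirac t) ≤ penalizedPairing p α s μ ν :=
    hmax (zero_dirac_mem_singularPairs ht)
  rw [penalizedPairing_dirac_zero ht, hzero] at h_dirac_zero
  rw [penalizedPairing_zero_dirac ht, hzero] at h_zero_dirac
  exact abs_le.mpr ⟨by linarith, by linarith⟩

theorem ae_eq_of_isMaxOn_penalizedPairing [MeasurableSingletonClass X]
    (hμν : (μ, ν) ∈ singularPairs s) (hpμ : Integrable p μ) (hpν : Integrable p ν) :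
    (∀ᵐ t ∂μ, p t = -α) ∧ ∀ᵐ t ∂ν, p t = α := by
  have hμ : μ sᶜ = 0 := hμν.2.2.1
  have hν : ν sᶜ = 0 := hμν.2.2.2.1
  have : IsFiniteMeasure μ := hμν.1
  have : IsFiniteMeasure ν := hμν.2.1
  have hμs : ∀ᵐ t ∂μ, t ∈ s := mem_ae_iff.mpr hμ
  have hνs : ∀ᵐ t ∂ν, t ∈ s := mem_ae_iff.mpr hν
  have hnonneg_μ : 0 ≤ᵐ[μ] fun t => α + p t := hμs.mono fun t ht => show 0 ≤ _ by
    linarith [(abs_le.mp (abs_le_of_isMaxOn_penalizedPairing hmax hμν ht)).1]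
  have hnonneg_ν : 0 ≤ᵐ[ν] fun t => α - p t := hνs.mono fun t ht => show 0 ≤ _ by
    linarith [(abs_le.mp (abs_le_of_isMaxOn_penalizedPairing hmax hμν ht)).2]
  have hsum : ∫ t, (α + p t) ∂μ + ∫ t, (α - p t) ∂ν = 0 := by
    have := penalizedPairing_eq_zero_of_isMaxOn hmax hμν
    rwa [penalizedPairing_eq_neg_integral_add_integral hμ hν hpμ hpν, neg_eq_zero] at this
  obtain ⟨hzero_μ, hzero_ν⟩ := (add_eq_zero_iff_of_nonneg (integral_nonneg_of_ae hnonneg_μ)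
    (integral_nonneg_of_ae hnonneg_ν)).mp hsum
  refine ⟨?_, ?_⟩
  · filter_upwards [(integral_eq_zero_iff_of_nonneg_ae hnonneg_μ
      ((integrable_const α).add hpμ)).mp hzero_μ] with t ht
    exact eq_neg_of_add_eq_zero_right ht
  · filter_upwards [(integral_eq_zero_iff_of_nonneg_ae hnonneg_ν
      ((integrable_const α).sub hpν)).mp hzero_ν] with t ht
    exact (sub_eq_zero.mp ht).symm

end MaximalPair

theorem optimal_measure_adjoint_characterization_general
    (T α : ℝ)
    (p : ℝ → ℝ) (hp : ContinuousOn p (Set.Icc 0 T))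
    (μ ν : Measure ℝ) [IsFiniteMeasure μ] [IsFiniteMeasure ν]
    (hμ : μ (Set.Ioo 0 T)ᶜ = 0) (hν : ν (Set.Ioo 0 T)ᶜ = 0)
    (hμν : μ ⟂ₘ ν)
    (hopt : ∀ σ τ : Measure ℝ, IsFiniteMeasure σ → IsFiniteMeasure τ →
      σ (Set.Ioo 0 T)ᶜ = 0 → τ (Set.Ioo 0 T)ᶜ = 0 → σ ⟂ₘ τ →
      (-(∫ t, p t ∂σ) + ∫ t, p t ∂τ) - (-(∫ t, p t ∂μ) + ∫ t, p t ∂ν)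
        ≤ α * ((σ (Set.Ioo 0 T)).toReal + (τ (Set.Ioo 0 T)).toReal)
          - α * ((μ (Set.Ioo 0 T)).toReal + (ν (Set.Ioo 0 T)).toReal)) :
    (∀ t ∈ Set.Ioo 0 T, |p t| ≤ α) ∧
    (-(∫ t, p t ∂μ) + ∫ t, p t ∂ν
        = α * ((μ (Set.Ioo 0 T)).toReal + (ν (Set.Ioo 0 T)).toReal)) ∧
    (μ {t | t ∈ Set.Ioo 0 T ∧ p t ≠ -α} = 0) ∧
    (ν {t | t ∈ Set.Ioo 0 T ∧ p t ≠ α} = 0) := by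
  have hmem : (μ, ν) ∈ singularPairs (Set.Ioo 0 T) := ⟨inferInstance, inferInstance, hμ, hν, hμν⟩
  have hmax : IsMaxOn (fun q => penalizedPairing p α (Set.Ioo 0 T) q.1 q.2)
      (singularPairs (Set.Ioo 0 T)) (μ, ν) := isMaxOn_iff.mpr fun q ⟨hσ, hτ, hσs, hτs, hστ⟩ => by
    have := hopt q.1 q.2 hσ hτ hσs hτs hστ
    simp only [penalizedPairing]
    linarith
  have hIcc : ∀ m : Measure ℝ, m (Set.Ioo 0 T)ᶜ = 0 → m (Set.Icc 0 T)ᶜ = 0 := fun m hm =>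
    measure_mono_null (Set.compl_subset_compl.mpr Set.Ioo_subset_Icc_self) hm
  obtain ⟨hμα, hνα⟩ := ae_eq_of_isMaxOn_penalizedPairing hmax hmem
    (hp.integrable_of_measure_compl_eq_zero isCompact_Icc (hIcc μ hμ))
    (hp.integrable_of_measure_compl_eq_zero isCompact_Icc (hIcc ν hν))
  have hzero := penalizedPairing_eq_zero_of_isMaxOn hmax hmem
  rw [penalizedPairing] at hzero
  exact ⟨fun t ht => abs_le_of_isMaxOn_penalizedPairing hmax hmem ht, by linarith,
    measure_mono_null (fun t ht => ht.2) (ae_iff.mp hμα),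
    measure_mono_null (fun t ht => ht.2) (ae_iff.mp hνα)⟩

theorem optimal_measure_adjoint_characterization
    (T α : ℝ) (hT : 0 < T) (hα : 0 < α)
    (p : ℝ → ℝ) (hp : ContinuousOn p (Set.Icc 0 T))
    (μ ν : Measure ℝ) [IsFiniteMeasure μ] [IsFiniteMeasure ν]
    (hμ : μ (Set.Ioo 0 T)ᶜ = 0) (hν : ν (Set.Ioo 0 T)ᶜ = 0)
    (hμν : μ ⟂ₘ ν)
    (hopt : ∀ σ τ : Measure ℝ, IsFiniteMeasure σ → IsFiniteMeasure τ →
      σ (Set.Ioo 0 T)ᶜ = 0 → τ (Set.Ioo 0 T)ᶜ = 0 → σ ⟂ₘ τ →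
      (-(∫ t, p t ∂σ) + ∫ t, p t ∂τ) - (-(∫ t, p t ∂μ) + ∫ t, p t ∂ν)
        ≤ α * ((σ (Set.Ioo 0 T)).toReal + (τ (Set.Ioo 0 T)).toReal)
          - α * ((μ (Set.Ioo 0 T)).toReal + (ν (Set.Ioo 0 T)).toReal)) :
    (∀ t ∈ Set.Ioo 0 T, |p t| ≤ α) ∧
    (-(∫ t, p t ∂μ) + ∫ t, p t ∂ν
        = α * ((μ (Set.Ioo 0 T)).toReal + (ν (Set.Ioo 0 T)).toReal)) ∧
    (μ {t | t ∈ Set.Ioo 0 T ∧ p t ≠ -α} = 0) ∧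
    (ν {t | t ∈ Set.Ioo 0 T ∧ p t ≠ α} = 0) :=
  optimal_measure_adjoint_characterization_general T α p hp μ ν hμ hν hμν hopt
end

section
/- Let T > 0, α > 0, γ > 0 and 𝔭, v̄ ∈ L²(0,T). Then the following are equivalent: (i) for every v ∈ L²(0,T), (γ/α)·∫₀ᵀ (𝔭(s) − v̄(s))(v(s) − v̄(s)) ds ≤ ‖v‖_{L¹(0,T)} − ‖v̄‖_{L¹(0,T)}; (ii) for almost every s ∈ (0,T), v̄(s) = max(0, 𝔭(s) − α/γ) + min(0, 𝔭(s) + α/γ). -/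
/-!
Write `c = α/γ` and `g = 𝔭 - v̄`. Pointwise, `v̄(s)` is the soft threshold of `𝔭(s)` exactly when
`|g(s)| ≤ c` and `c |v̄(s)| ≤ g(s) v̄(s)`, i.e. when `g(s)` is a subgradient of `c |·|` at `v̄(s)`;
integrating gives (ii) ⇒ (i). Conversely, testing (i) with `v = v̄ + 1_S h` for all measurable `S`
localises it to the pointwise inequality `g h ≤ c (|v̄ + h| - |v̄|)` a.e., and the choices
`h = 1`, `h = -1`, `h = -v̄` give the two pointwise conditions.
-/

open MeasureTheory

noncomputable section

def softThreshold (c q : ℝ) : ℝ := max 0 (q - c) + min 0 (q + c)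

theorem eq_softThreshold_iff {c q w : ℝ} (hc : 0 ≤ c) :
    w = softThreshold c q ↔ |q - w| ≤ c ∧ c * |w| ≤ (q - w) * w := by
  unfold softThreshold
  constructor
  · rintro rfl
    rcases le_total c q with h | h
    · rw [max_eq_right (by linarith), min_eq_left (by linarith), add_zero,
        abs_of_nonneg (by linarith : 0 ≤ q - c)]
      constructor <;> [rw [sub_sub_cancel, abs_of_nonneg hc]; linarith]
    rcases le_total q (-c) with h' | h'
    · rw [max_eq_left (by linarith), min_eq_right (by linarith), zero_add,
        abs_of_nonpos (by linarith : q + c ≤ 0)]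
      constructor <;> [rw [sub_add_cancel_left, abs_neg, abs_of_nonneg hc]; linarith]
    · rw [max_eq_left (by linarith), min_eq_left (by linarith), add_zero, sub_zero, abs_zero]
      exact ⟨abs_le.2 ⟨h', h⟩, by simp⟩
  · rintro ⟨hqw, hw⟩
    obtain ⟨hlo, hhi⟩ := abs_le.1 hqw
    rcases lt_trichotomy w 0 with hneg | rfl | hpos
    · rw [abs_of_neg hneg] at hw
      have : q = w - c := by nlinarith
      rw [max_eq_left (by linarith), min_eq_right (by linarith)]
      linarith
    · rw [max_eq_left (by linarith), min_eq_left (by linarith), add_zero]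
    · rw [abs_of_pos hpos] at hw
      have : q = w + c := by nlinarith
      rw [max_eq_right (by linarith), min_eq_left (by linarith)]
      linarith

theorem mul_sub_le_of_abs_le {c g w : ℝ} (hg : |g| ≤ c) (hw : c * |w| ≤ g * w) (x : ℝ) :
    g * (x - w) ≤ c * (|x| - |w|) := by
  have : g * x ≤ c * |x| :=
    calc g * x ≤ |g| * |x| := by rw [← abs_mul]; exact le_abs_self _
      _ ≤ c * |x| := mul_le_mul_of_nonneg_right hg (abs_nonneg x)
  linarith

section Lp

variable {X : Type*} [MeasurableSpace X] {μ : Measure X}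

theorem MeasureTheory.Lp.integrable_sub_mul_sub (q w v : Lp ℝ 2 μ) :
    Integrable (fun s => (q s - w s) * (v s - w s)) μ :=
  ((Lp.memLp q).sub (Lp.memLp w)).integrable_mul ((Lp.memLp v).sub (Lp.memLp w))

variable [IsFiniteMeasure μ]

theorem MeasureTheory.Lp.integrable_two (v : Lp ℝ 2 μ) : Integrable (fun s => v s) μ :=
  (Lp.memLp v).integrable one_le_two

theorem MeasureTheory.Lp.integrable_abs_sub_abs (v w : Lp ℝ 2 μ) :
    Integrable (fun s => |v s| - |w s|) μ :=
  (Lp.integrable_two v).abs.sub (Lp.integrable_two w).abs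

theorem integral_sub_mul_sub_le_of_ae {c : ℝ} {q w : Lp ℝ 2 μ}
    (h : ∀ᵐ s ∂μ, |q s - w s| ≤ c ∧ c * |w s| ≤ (q s - w s) * w s) (v : Lp ℝ 2 μ) :
    ∫ s, (q s - w s) * (v s - w s) ∂μ ≤ c * ((∫ s, |v s| ∂μ) - ∫ s, |w s| ∂μ) := by
  rw [← integral_sub (Lp.integrable_two v).abs (Lp.integrable_two w).abs, ← integral_const_mul]
  refine integral_mono_ae (Lp.integrable_sub_mul_sub q w v)
    ((Lp.integrable_abs_sub_abs v w).const_mul c) ?_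
  filter_upwards [h] with s ⟨hg, hw⟩
  exact mul_sub_le_of_abs_le hg hw (v s)

theorem ae_mul_le_of_forall_integral_le {c : ℝ} {q w : Lp ℝ 2 μ}
    (H : ∀ v : Lp ℝ 2 μ,
      ∫ s, (q s - w s) * (v s - w s) ∂μ ≤ c * ((∫ s, |v s| ∂μ) - ∫ s, |w s| ∂μ))
    {h : X → ℝ} (hh : MemLp h 2 μ) :
    ∀ᵐ s ∂μ, (q s - w s) * h s ≤ c * (|w s + h s| - |w s|) := by
  set f : X → ℝ := fun s => c * (|w s + h s| - |w s|) - (q s - w s) * h s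
  have hf : Integrable f μ :=
    ((((Lp.integrable_two w).add (hh.integrable one_le_two)).abs.sub
      (Lp.integrable_two w).abs).const_mul c).sub
      (((Lp.memLp q).sub (Lp.memLp w)).integrable_mul hh)
  have hlocal : ∀ S, MeasurableSet S → μ S < ⊤ → 0 ≤ ∫ s in S, f s ∂μ := by
    intro S hS _
    set v : Lp ℝ 2 μ := w + (hh.indicator hS).toLp _
    have hv : ∀ᵐ s ∂μ, v s = w s + S.indicator h s := by
      filter_upwards [Lp.coeFn_add w ((hh.indicator hS).toLp _), (hh.indicator hS).coeFn_toLp]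
        with s h₁ h₂
      rw [h₁, Pi.add_apply, h₂]
    have hfv : (fun s => c * (|v s| - |w s|) - (q s - w s) * (v s - w s)) =ᵐ[μ]
        S.indicator f := by
      filter_upwards [hv] with s hs
      by_cases hsS : s ∈ S <;> simp [f, hs, hsS]
    have hHv := H v
    rw [← integral_indicator hS, ← integral_congr_ae hfv,
      integral_sub ((Lp.integrable_abs_sub_abs v w).const_mul c)
        (Lp.integrable_sub_mul_sub q w v),
      integral_const_mul, integral_sub (Lp.integrable_two v).abs (Lp.integrable_two w).abs]
    linarith
  filter_upwards [ae_nonneg_of_forall_setIntegral_nonneg hf hlocal] with s hs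
  simpa [f] using hs

theorem forall_integral_le_iff_ae_eq_softThreshold {c : ℝ} (hc : 0 ≤ c) (q w : Lp ℝ 2 μ) :
    (∀ v : Lp ℝ 2 μ,
      ∫ s, (q s - w s) * (v s - w s) ∂μ ≤ c * ((∫ s, |v s| ∂μ) - ∫ s, |w s| ∂μ)) ↔
      ∀ᵐ s ∂μ, w s = softThreshold c (q s) := by
  simp_rw [eq_softThreshold_iff hc]
  refine ⟨fun H => ?_, integral_sub_mul_sub_le_of_ae⟩
  filter_upwards [ae_mul_le_of_forall_integral_le H (memLp_const 1),
    ae_mul_le_of_forall_integral_le H (memLp_const (-1)),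
    ae_mul_le_of_forall_integral_le H (Lp.memLp w).neg] with s h₁ h₂ h₃
  have hup : |w s + 1| - |w s| ≤ 1 := by linarith [abs_add_le (w s) 1, abs_one (α := ℝ)]
  have hdown : |w s + -1| - |w s| ≤ 1 := by
    linarith [abs_add_le (w s) (-1), abs_neg (1 : ℝ), abs_one (α := ℝ)]
  simp only [Pi.neg_apply, add_neg_cancel, abs_zero, zero_sub, mul_neg, mul_one] at h₁ h₂ h₃
  exact ⟨abs_le.2 ⟨by nlinarith, by nlinarith⟩, by linarith⟩

end Lp

theorem subdifferential_iff_soft_thresholding_general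
    (T α γ : ℝ) (hα : 0 < α) (hγ : 0 < γ)
    (p vbar : Lp ℝ 2 (volume.restrict (Set.Ioo 0 T))) :
    (∀ v : Lp ℝ 2 (volume.restrict (Set.Ioo 0 T)),
        (γ / α) * ∫ s, (p s - vbar s) * (v s - vbar s) ∂(volume.restrict (Set.Ioo 0 T))
          ≤ (∫ s, |v s| ∂(volume.restrict (Set.Ioo 0 T)))
            - ∫ s, |vbar s| ∂(volume.restrict (Set.Ioo 0 T))) ↔
      (∀ᵐ s ∂(volume.restrict (Set.Ioo 0 T)),
        vbar s = max 0 (p s - α / γ) + min 0 (p s + α / γ)) := by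
  have rescale : ∀ a b : ℝ, γ / α * a ≤ b ↔ a ≤ α / γ * b := fun a b => by
    rw [← le_div_iff₀' (by positivity), div_div_eq_mul_div, mul_div_assoc, mul_comm]
  simp_rw [rescale]
  exact forall_integral_le_iff_ae_eq_softThreshold (by positivity) p vbar

/-- The subdifferential inclusion `(γ/α)(𝔭 − v̄) ∈ ∂‖·‖_{L¹}(v̄)` is equivalent to the
pointwise soft-thresholding formula for `v̄`. -/
theorem subdifferential_iff_soft_thresholding
    (T α γ : ℝ) (hT : 0 < T) (hα : 0 < α) (hγ : 0 < γ)
    (p vbar : Lp ℝ 2 (volume.restrict (Set.Ioo 0 T))) :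
    (∀ v : Lp ℝ 2 (volume.restrict (Set.Ioo 0 T)),
        (γ / α) * ∫ s, (p s - vbar s) * (v s - vbar s) ∂(volume.restrict (Set.Ioo 0 T))
          ≤ (∫ s, |v s| ∂(volume.restrict (Set.Ioo 0 T)))
            - ∫ s, |vbar s| ∂(volume.restrict (Set.Ioo 0 T))) ↔
      (∀ᵐ s ∂(volume.restrict (Set.Ioo 0 T)),
        vbar s = max 0 (p s - α / γ) + min 0 (p s + α / γ)) :=
  subdifferential_iff_soft_thresholding_general T α γ hα hγ p vbar

end
end

section
/- Let T > 0, m ≥ 1 an integer, X := L²((0,T);ℝ^m) × ℝ^m with the product Hilbert space structure, and let A : X → X be a continuous linear map with ⟨A z, z⟩_X ≥ 0 for all z ∈ X; write A(h,k) = (A₁(h,k), A₂(h,k)) ∈ L²((0,T);ℝ^m) × ℝ^m. Let γ > 0, κ > 0 and let E₁,…,E_m ⊆ (0,T) be Lebesgue-measurable sets. Then the bounded linear operator D : X → X defined by D(h,k) = ((hᵢ + γ⁻¹·𝟙_{Eᵢ}·(A₁(h,k))ᵢ)_{i=1}^m, (κ/γ)k + γ⁻¹·A₂(h,k)) is injective.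 -/
open MeasureTheory RealInnerProductSpace

/-- The product Hilbert space `L²((0,T);ℝ^m) × ℝ^m`. -/
abbrev Xsp (T : ℝ) (m : ℕ) :=
  Lp (EuclideanSpace ℝ (Fin m)) 2 (volume.restrict (Set.Ioo 0 T)) × EuclideanSpace ℝ (Fin m)

/-!
If `D z = 0`, the second component gives `A₂ z = -κ z₂`. In the first, on `Eᵢ` we get
`(A₁ z)ᵢ = -γ zᵢ` and off `Eᵢ` we get `zᵢ = 0`; either way `(A₁ z)ᵢ zᵢ = -γ zᵢ²` pointwise,
because the indicator is idempotent. Hence `0 ≤ ⟪A z, z⟫ = -γ ‖z₁‖² - κ ‖z₂‖²`, forcing `z = 0`.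
-/

theorem Set.isIdempotentElem_indicator_one_apply {α R : Type*} [MulZeroOneClass R]
    (s : Set α) (t : α) : IsIdempotentElem (s.indicator (fun _ => (1 : R)) t) := by
  by_cases ht : t ∈ s <;> simp [ht, IsIdempotentElem]

theorem mul_eq_neg_mul_mul_self_of_add_inv_mul_eq_zero {γ c x a : ℝ} (hγ : γ ≠ 0)
    (hc : IsIdempotentElem c) (h : x + γ⁻¹ * c * a = 0) : x * a = -γ * (x * x) := by
  have hcx : c * x = x := by linear_combination (c - 1) * h - γ⁻¹ * a * hc.eq
  have hγx : γ * x + c * a = 0 := by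
    field_simp at h
    linear_combination h
  linear_combination -a * hcx + x * hγx

theorem EuclideanSpace.inner_eq_neg_mul_inner_self_of_add_inv_mul_eq_zero {ι : Type*}
    [Fintype ι] {γ : ℝ} (hγ : γ ≠ 0) {c : ι → ℝ} (hc : ∀ i, IsIdempotentElem (c i))
    {x a : EuclideanSpace ℝ ι} (h : ∀ i, x i + γ⁻¹ * c i * a i = 0) :
    ⟪a, x⟫ = -γ * ⟪x, x⟫ := by
  simp only [PiLp.inner_apply, RCLike.inner_apply, conj_trivial, Finset.mul_sum]
  exact Finset.sum_congr rfl fun i _ =>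
    mul_eq_neg_mul_mul_self_of_add_inv_mul_eq_zero hγ (hc i) (h i)

theorem MeasureTheory.L2.inner_eq_mul_norm_sq_of_ae {α E : Type*} [MeasurableSpace α]
    {μ : Measure α} [NormedAddCommGroup E] [InnerProductSpace ℝ E] {f g : α →₂[μ] E} {c : ℝ}
    (h : ∀ᵐ t ∂μ, ⟪f t, g t⟫ = c * ⟪g t, g t⟫) : ⟪f, g⟫ = c * ‖g‖ ^ 2 := by
  rw [← real_inner_self_eq_norm_sq, L2.inner_def, L2.inner_def, integral_congr_ae h,
    integral_const_mul]

theorem inner_eq_neg_mul_norm_sq_of_div_smul_add_inv_smul_eq_zero {E : Type*}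
    [NormedAddCommGroup E] [InnerProductSpace ℝ E] {γ κ : ℝ} (hγ : γ ≠ 0) {y a : E}
    (h : (κ / γ) • y + γ⁻¹ • a = 0) : ⟪a, y⟫ = -κ * ‖y‖ ^ 2 := by
  rw [div_eq_mul_inv, mul_comm, ← smul_smul, ← smul_add, smul_eq_zero, inv_eq_zero] at h
  rw [eq_neg_of_add_eq_zero_right (h.resolve_left hγ), ← neg_smul, real_inner_smul_left,
    real_inner_self_eq_norm_sq]

theorem Prod.eq_zero_of_nonneg_neg_mul_norm_sq_add {E F : Type*} [NormedAddCommGroup E]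
    [NormedAddCommGroup F] {γ κ : ℝ} (hγ : 0 < γ) (hκ : 0 < κ) {x : E} {y : F}
    (h : 0 ≤ -γ * ‖x‖ ^ 2 + -κ * ‖y‖ ^ 2) : (x, y) = 0 := by
  have hx : ‖x‖ ^ 2 = 0 := by nlinarith [sq_nonneg ‖x‖, sq_nonneg ‖y‖]
  have hy : ‖y‖ ^ 2 = 0 := by nlinarith [sq_nonneg ‖x‖, sq_nonneg ‖y‖]
  simp_all

theorem newton_derivative_injective_kappa_pos_general
    (T : ℝ) (m : ℕ)
    (A : Xsp T m →L[ℝ] Xsp T m)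
    (hA : ∀ z : Xsp T m, 0 ≤ ⟪(A z).1, z.1⟫ + ⟪(A z).2, z.2⟫)
    (γ κ : ℝ) (hγ : 0 < γ) (hκ : 0 < κ)
    (E : Fin m → Set ℝ)
    (D : Xsp T m →L[ℝ] Xsp T m)
    (hD1 : ∀ z : Xsp T m, ∀ᵐ t ∂(volume.restrict (Set.Ioo 0 T)), ∀ i,
      (D z).1 t i = z.1 t i + γ⁻¹ * (E i).indicator (fun _ => (1 : ℝ)) t * (A z).1 t i)
    (hD2 : ∀ z : Xsp T m, (D z).2 = (κ / γ) • z.2 + γ⁻¹ • (A z).2) :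
    Function.Injective D := by
  refine (injective_iff_map_eq_zero D).mpr fun z hz => ?_
  have hinner₂ : ⟪(A z).2, z.2⟫ = -κ * ‖z.2‖ ^ 2 :=
    inner_eq_neg_mul_norm_sq_of_div_smul_add_inv_smul_eq_zero hγ.ne' (by rw [← hD2, hz]; rfl)
  have hinner₁ : ⟪(A z).1, z.1⟫ = -γ * ‖z.1‖ ^ 2 := by
    have hDz₁ : ⇑(D z).1 =ᵐ[volume.restrict (Set.Ioo 0 T)] 0 := by
      rw [hz]; exact Lp.coeFn_zero _ _ _
    refine L2.inner_eq_mul_norm_sq_of_ae ?_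
    filter_upwards [hD1 z, hDz₁] with t ht h0
    refine EuclideanSpace.inner_eq_neg_mul_inner_self_of_add_inv_mul_eq_zero hγ.ne'
      (fun i => (E i).isIdempotentElem_indicator_one_apply t) fun i => ?_
    rw [← ht i, h0]; rfl
  exact Prod.eq_zero_of_nonneg_neg_mul_norm_sq_add hγ hκ (hinner₁ ▸ hinner₂ ▸ hA z)

/-- Injectivity of the Newton derivative `D = DF_γ(v,c)` in the case `κ > 0`. -/
theorem newton_derivative_injective_kappa_pos
    (T : ℝ) (hT : 0 < T) (m : ℕ) (hm : 1 ≤ m)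
    (A : Xsp T m →L[ℝ] Xsp T m)
    (hA : ∀ z : Xsp T m, 0 ≤ ⟪(A z).1, z.1⟫ + ⟪(A z).2, z.2⟫)
    (γ κ : ℝ) (hγ : 0 < γ) (hκ : 0 < κ)
    (E : Fin m → Set ℝ) (hEm : ∀ i, MeasurableSet (E i)) (hEs : ∀ i, E i ⊆ Set.Ioo 0 T)
    (D : Xsp T m →L[ℝ] Xsp T m)
    (hD1 : ∀ z : Xsp T m, ∀ᵐ t ∂(volume.restrict (Set.Ioo 0 T)), ∀ i,
      (D z).1 t i = z.1 t i + γ⁻¹ * (E i).indicator (fun _ => (1 : ℝ)) t * (A z).1 t i)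
    (hD2 : ∀ z : Xsp T m, (D z).2 = (κ / γ) • z.2 + γ⁻¹ • (A z).2) :
    Function.Injective D :=
  newton_derivative_injective_kappa_pos_general T m A hA γ κ hγ hκ E D hD1 hD2
end

section
/- Let T > 0, m ≥ 1 an integer, X := L²((0,T);ℝ^m) × ℝ^m with the product Hilbert space structure, and let A : X → X be a continuous linear self-adjoint map with ⟨A z, z⟩_X ≥ 0 for all z ∈ X; write A(h,k) = (A₁(h,k), A₂(h,k)) ∈ L²((0,T);ℝ^m) × ℝ^m. Let γ > 0 and κ > 0. Then there exists a constant C > 0, depending only on γ, κ and the operator norm ‖A‖, such that for every choice of Lebesgue-measurable sets E₁,…,E_m ⊆ (0,T), the bounded linear operator D : X → X defined by D(h,k) = ((hᵢ + γ⁻¹·𝟙_{Eᵢ}·(A₁(h,k))ᵢ)_{i=1}^m, (κ/γ)k + γ⁻¹·A₂(h,k)) is bijective and its inverse satisfies ‖D⁻¹‖ ≤ C. -/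
open MeasureTheory RealInnerProductSpace

/-!
Write `D = S + γ⁻¹ Q A` with `S = id × (κ/γ)` and `Q = P × id`, where `P` is the orthogonal
projection of `L²` multiplying the `i`-th coordinate by `𝟙_{Eᵢ}`, and put `D_c = S + c Q A`.
Testing `D_c z` against `(P h, k)` and using positivity of `A` at `(P h, k)`, which differs from
`z = (h, k)` only by `h - P h = (1 - P) (D_c z).1`, gives
`‖P h‖² + (κ/γ) ‖k‖² ≤ (1 + c ‖A‖) ‖D_c z‖ (‖P h‖ + ‖k‖)`, hence `‖z‖ ≤ C ‖D_c z‖` with `C`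
depending only on `γ`, `κ`, `‖A‖`, uniformly in `c ∈ [0, γ⁻¹]`. As `D_0 = S` is invertible, the
method of continuity carries invertibility along `c` up to `D = D_{γ⁻¹}`.
-/

open scoped ENNReal

namespace LinearMap.IsSymmetricProjection

section RCLike

variable {𝕜 E : Type*} [RCLike 𝕜] [NormedAddCommGroup E] [InnerProductSpace 𝕜 E]
  {P : E →ₗ[𝕜] E}

theorem inner_apply_sub_apply (hP : P.IsSymmetricProjection) (v w : E) :
    inner 𝕜 (P v) (w - P w) = 0 := by
  rw [hP.isSymmetric, map_sub, ← Module.End.mul_apply, hP.isIdempotentElem.eq, sub_self,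
    inner_zero_right]

theorem norm_sq_eq_add (hP : P.IsSymmetricProjection) (v : E) :
    ‖v‖ ^ 2 = ‖P v‖ ^ 2 + ‖v - P v‖ ^ 2 := by
  have := norm_add_sq_eq_norm_sq_add_norm_sq_of_inner_eq_zero _ _ (hP.inner_apply_sub_apply v v)
  rw [add_sub_cancel] at this
  simpa only [sq] using this

theorem norm_apply_le (hP : P.IsSymmetricProjection) (v : E) : ‖P v‖ ≤ ‖v‖ :=
  (sq_le_sq₀ (norm_nonneg _) (norm_nonneg _)).mp <| by
    nlinarith [hP.norm_sq_eq_add v, sq_nonneg ‖v - P v‖]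

theorem norm_sub_apply_le (hP : P.IsSymmetricProjection) (v : E) : ‖v - P v‖ ≤ ‖v‖ :=
  (sq_le_sq₀ (norm_nonneg _) (norm_nonneg _)).mp <| by
    nlinarith [hP.norm_sq_eq_add v, sq_nonneg ‖P v‖]

end RCLike

theorem real_inner_apply_self {E : Type*} [NormedAddCommGroup E] [InnerProductSpace ℝ E]
    {P : E →ₗ[ℝ] E} (hP : P.IsSymmetricProjection) (v : E) :
    ⟪v, P v⟫ = ‖P v‖ ^ 2 := by
  calc ⟪v, P v⟫ = ⟪v, P (P v)⟫ := by rw [← Module.End.mul_apply, hP.isIdempotentElem.eq]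
    _ = ‖P v‖ ^ 2 := by rw [← hP.isSymmetric, real_inner_self_eq_norm_sq]

end LinearMap.IsSymmetricProjection

namespace MeasureTheory.Lp

section

variable {α E : Type*} {m : MeasurableSpace α} {μ : Measure α} [NormedAddCommGroup E]
  [NormedSpace ℝ E] {L : α → E →L[ℝ] E} {C : ℝ}

theorem memLp_apply_of_norm_le {p : ℝ≥0∞} (hL : AEStronglyMeasurable L μ) (hC : ∀ t, ‖L t‖ ≤ C)
    (f : Lp E p μ) : MemLp (fun t => L t (f t)) p μ :=
  (Lp.memLp f).of_le_mul
    ((ContinuousLinearMap.id ℝ (E →L[ℝ] E)).aestronglyMeasurable_comp₂ hL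
      (Lp.aestronglyMeasurable f))
    (.of_forall fun t => (L t).le_of_opNorm_le (hC t) _)

variable (p : ℝ≥0∞) [Fact (1 ≤ p)]

noncomputable def pointwiseCLM (hL : AEStronglyMeasurable L μ) (hC : ∀ t, ‖L t‖ ≤ C) :
    Lp E p μ →L[ℝ] Lp E p μ :=
  LinearMap.mkContinuous
    { toFun := fun f => (memLp_apply_of_norm_le hL hC f).toLp _
      map_add' := fun f g => by
        rw [← MemLp.toLp_add]
        refine MemLp.toLp_congr _ _ ?_
        filter_upwards [Lp.coeFn_add f g] with t ht
        simp only [ht, Pi.add_apply, map_add]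
      map_smul' := fun c f => by
        rw [RingHom.id_apply, ← MemLp.toLp_const_smul]
        refine MemLp.toLp_congr _ _ ?_
        filter_upwards [Lp.coeFn_smul c f] with t ht
        simp only [ht, Pi.smul_apply, map_smul] } C
    fun f => Lp.norm_le_mul_norm_of_ae_le_mul <| by
      filter_upwards [(memLp_apply_of_norm_le hL hC f).coeFn_toLp] with t ht
      exact (congrArg norm ht).trans_le ((L t).le_of_opNorm_le (hC t) _)

variable {p}

theorem coeFn_pointwiseCLM (hL : AEStronglyMeasurable L μ) (hC : ∀ t, ‖L t‖ ≤ C) (f : Lp E p μ) :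
    pointwiseCLM p hL hC f =ᵐ[μ] fun t => L t (f t) :=
  (memLp_apply_of_norm_le hL hC f).coeFn_toLp

theorem isIdempotentElem_pointwiseCLM (hL : AEStronglyMeasurable L μ) (hC : ∀ t, ‖L t‖ ≤ C)
    (hLL : ∀ t, IsIdempotentElem (L t)) : IsIdempotentElem (pointwiseCLM p hL hC) := by
  ext1 f
  refine Lp.ext ?_
  filter_upwards [coeFn_pointwiseCLM hL hC (pointwiseCLM p hL hC f), coeFn_pointwiseCLM hL hC f]
    with t h₁ h₂
  rw [mul_apply_eq_comp, h₁, h₂, ← mul_apply_eq_comp, (hLL t).eq]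

end

theorem isSymmetricProjection_pointwiseCLM {α E : Type*} {m : MeasurableSpace α} {μ : Measure α}
    [NormedAddCommGroup E] [InnerProductSpace ℝ E] {L : α → E →L[ℝ] E} {C : ℝ}
    (hL : AEStronglyMeasurable L μ) (hC : ∀ t, ‖L t‖ ≤ C)
    (hLL : ∀ t, (L t : E →ₗ[ℝ] E).IsSymmetricProjection) :
    (pointwiseCLM 2 hL hC : Lp E 2 μ →ₗ[ℝ] Lp E 2 μ).IsSymmetricProjection where
  isIdempotentElem := ContinuousLinearMap.isIdempotentElem_toLinearMap_iff.mpr <|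
    isIdempotentElem_pointwiseCLM hL hC fun t =>
      ContinuousLinearMap.isIdempotentElem_toLinearMap_iff.mp (hLL t).isIdempotentElem
  isSymmetric f g := by
    simp only [ContinuousLinearMap.coe_coe]
    rw [L2.inner_def, L2.inner_def]
    refine integral_congr_ae ?_
    filter_upwards [coeFn_pointwiseCLM hL hC f, coeFn_pointwiseCLM hL hC g] with t hf hg
    rw [hf, hg]
    exact (hLL t).isSymmetric (f t) (g t)

end MeasureTheory.Lp

section

variable {α ι : Type*} [Fintype ι] [DecidableEq ι] (E : ι → Set α) (t : α)

noncomputable def diagIndicator : EuclideanSpace ℝ ι →L[ℝ] EuclideanSpace ℝ ι :=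
  Matrix.toEuclideanCLM (𝕜 := ℝ) (Matrix.diagonal fun i => (E i).indicator (fun _ => (1 : ℝ)) t)

theorem diagIndicator_apply (v : EuclideanSpace ℝ ι) (i : ι) :
    diagIndicator E t v i = (E i).indicator (fun _ => (1 : ℝ)) t * v i :=
  Matrix.mulVec_diagonal _ _ i

theorem isSymmetricProjection_diagIndicator :
    (diagIndicator E t : EuclideanSpace ℝ ι →ₗ[ℝ] EuclideanSpace ℝ ι).IsSymmetricProjection := by
  refine ContinuousLinearMap.IsStarProjection.isSymmetricProjection
    (IsStarProjection.map ?_ (Matrix.toEuclideanCLM (𝕜 := ℝ) (n := ι)))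
  refine ⟨?_, ?_⟩
  · rw [IsIdempotentElem, Matrix.diagonal_mul_diagonal]
    congr 1
    ext i
    by_cases h : t ∈ E i <;> simp [h]
  · rw [IsSelfAdjoint, Matrix.star_eq_conjTranspose, Matrix.diagonal_conjTranspose]
    rfl

theorem norm_diagIndicator_le : ‖diagIndicator E t‖ ≤ 1 :=
  ContinuousLinearMap.opNorm_le_bound _ zero_le_one fun v => by
    rw [one_mul]
    exact (isSymmetricProjection_diagIndicator E t).norm_apply_le v

variable {E} in
theorem measurable_diagIndicator [MeasurableSpace α] (hE : ∀ i, MeasurableSet (E i)) : Measurable (diagIndicator E) := by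
  have hcont : Continuous fun d : ι → ℝ =>
      (Matrix.toEuclideanCLM (𝕜 := ℝ) (Matrix.diagonal d)) :=
    LinearMap.continuous_of_finiteDimensional
      ((Matrix.toEuclideanCLM (n := ι) (𝕜 := ℝ)).toAlgEquiv.toLinearMap ∘ₗ
        Matrix.diagonalLinearMap ι ℝ ℝ)
  exact hcont.measurable.comp (measurable_pi_lambda _ fun i => measurable_const.indicator (hE i))

end

theorem add_le_of_mul_sq_add_sq_le {x y a B : ℝ} (hx : 0 ≤ x) (hy : 0 ≤ y) (ha : 0 < a)
    (hB : 0 ≤ B) (h : a * (x ^ 2 + y ^ 2) ≤ B * (x + y)) : x + y ≤ 2 * B / a := by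
  rw [le_div_iff₀ ha]
  rcases (add_nonneg hx hy).eq_or_lt with hs | hs
  · rw [← hs, zero_mul]
    linarith
  · nlinarith [sq_nonneg (x - y)]

section NewtonOperator

variable {H V : Type*} [NormedAddCommGroup H] [InnerProductSpace ℝ H]
  [NormedAddCommGroup V] [InnerProductSpace ℝ V]

theorem Prod.inner_fst_add_inner_snd_le (x y : H × V) :
    ⟪x.1, y.1⟫ + ⟪x.2, y.2⟫ ≤ ‖x‖ * (‖y.1‖ + ‖y.2‖) :=
  calc ⟪x.1, y.1⟫ + ⟪x.2, y.2⟫ ≤ ‖x.1‖ * ‖y.1‖ + ‖x.2‖ * ‖y.2‖ :=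
        add_le_add (real_inner_le_norm _ _) (real_inner_le_norm _ _)
    _ ≤ ‖x‖ * ‖y.1‖ + ‖x‖ * ‖y.2‖ := by gcongr; exacts [norm_fst_le x, norm_snd_le x]
    _ = ‖x‖ * (‖y.1‖ + ‖y.2‖) := by ring

noncomputable def newtonOp (P : H →L[ℝ] H) (A : H × V →L[ℝ] H × V) (β c : ℝ) :
    H × V →L[ℝ] H × V :=
  (ContinuousLinearMap.id ℝ H).prodMap (β • ContinuousLinearMap.id ℝ V) +
    c • (P.prodMap (ContinuousLinearMap.id ℝ V)).comp A

variable {P : H →L[ℝ] H} {A : H × V →L[ℝ] H × V} {β c : ℝ}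

@[simp]
theorem newtonOp_apply_fst (z : H × V) : (newtonOp P A β c z).1 = z.1 + c • P (A z).1 := rfl

@[simp]
theorem newtonOp_apply_snd (z : H × V) : (newtonOp P A β c z).2 = β • z.2 + c • (A z).2 := rfl

theorem newtonOp_mul (s : ℝ) :
    newtonOp P A β (s * c) = newtonOp P A β 0 + s • (newtonOp P A β c - newtonOp P A β 0) := by
  simp only [newtonOp, zero_smul, add_zero, add_sub_cancel_left, smul_smul]

theorem isUnit_newtonOp_zero (hβ : β ≠ 0) : IsUnit (newtonOp P A β 0) := by
  refine isUnit_iff_exists.mpr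
    ⟨(ContinuousLinearMap.id ℝ H).prodMap (β⁻¹ • ContinuousLinearMap.id ℝ V), ?_, ?_⟩ <;>
  ext z <;> simp [newtonOp, smul_smul, hβ]

variable (hP : (P : H →ₗ[ℝ] H).IsSymmetricProjection)
include hP

theorem norm_sub_projection_le_norm_newtonOp (z : H × V) :
    ‖z.1 - P z.1‖ ≤ ‖newtonOp P A β c z‖ := by
  set d := newtonOp P A β c z
  have hd : d.1 - P d.1 = z.1 - P z.1 := by
    have hPP : P (P (A z).1) = P (A z).1 := congr($hP.isIdempotentElem.eq (A z).1)
    simp only [d, newtonOp_apply_fst, map_add, map_smul, hPP]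
    abel
  calc ‖z.1 - P z.1‖ = ‖d.1 - P d.1‖ := by rw [hd]
    _ ≤ ‖d.1‖ := hP.norm_sub_apply_le d.1
    _ ≤ ‖d‖ := norm_fst_le d

theorem inner_newtonOp_projection (z : H × V) :
    ⟪(newtonOp P A β c z).1, P z.1⟫ + ⟪(newtonOp P A β c z).2, z.2⟫ =
      ‖P z.1‖ ^ 2 + β * ‖z.2‖ ^ 2 + c * (⟪(A z).1, P z.1⟫ + ⟪(A z).2, z.2⟫) := by
  have hPP : ⟪P (A z).1, P z.1⟫ = ⟪(A z).1, P z.1⟫ :=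
    (hP.isSymmetric _ _).trans congr(⟪(A z).1, $hP.isIdempotentElem.eq z.1⟫)
  have hPz : ⟪z.1, P z.1⟫ = ‖P z.1‖ ^ 2 := hP.real_inner_apply_self z.1
  simp only [newtonOp_apply_fst, newtonOp_apply_snd, inner_add_left, real_inner_smul_left,
    hPz, hPP, real_inner_self_eq_norm_sq]
  ring

variable (hA : ∀ z, 0 ≤ ⟪(A z).1, z.1⟫ + ⟪(A z).2, z.2⟫)
include hA

/-- Positivity of `A` is applied at `(P h, k)`, which differs from `z = (h, k)` only by
`h - P h`, a vector controlled by `newtonOp` itself. -/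
theorem inner_map_projection_ge (z : H × V) :
    -(‖A‖ * ‖newtonOp P A β c z‖ * (‖P z.1‖ + ‖z.2‖)) ≤ ⟪(A z).1, P z.1⟫ + ⟪(A z).2, z.2⟫ := by
  set w : H × V := (P z.1, z.2)
  have hwz : ‖w - z‖ ≤ ‖newtonOp P A β c z‖ := by
    have : w - z = -(z.1 - P z.1, 0) := by ext <;> simp [w]
    rw [this, norm_neg, Prod.norm_mk, norm_zero, max_eq_left (norm_nonneg _)]
    exact norm_sub_projection_le_norm_newtonOp hP z
  have hsplit : A z = A w - A (w - z) := by rw [map_sub, sub_sub_cancel]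
  have hcross := Prod.inner_fst_add_inner_snd_le (A (w - z)) w
  have hnorm : ‖A (w - z)‖ ≤ ‖A‖ * ‖newtonOp P A β c z‖ :=
    (A.le_opNorm _).trans (by gcongr)
  have := hA w
  rw [hsplit]
  simp only [Prod.fst_sub, Prod.snd_sub, inner_sub_left]
  nlinarith [mul_le_mul_of_nonneg_right hnorm (add_nonneg (norm_nonneg (P z.1)) (norm_nonneg z.2))]

theorem norm_le_mul_norm_newtonOp {K : ℝ} (hβ : 0 < β) (hc : 0 ≤ c) (hK : c * ‖A‖ ≤ K)
    (z : H × V) : ‖z‖ ≤ (2 * (1 + K) / min 1 β + 1) * ‖newtonOp P A β c z‖ := by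
  set N := ‖newtonOp P A β c z‖
  set u := ‖P z.1‖
  set k := ‖z.2‖
  have henergy : u ^ 2 + β * k ^ 2 ≤ (1 + K) * N * (u + k) := by
    have h₁ := inner_newtonOp_projection hP (A := A) (β := β) (c := c) z
    have h₂ := inner_map_projection_ge hP hA (β := β) (c := c) z
    have h₃ := Prod.inner_fst_add_inner_snd_le (newtonOp P A β c z) (P z.1, z.2)
    have hNuk : 0 ≤ N * (u + k) := by positivity
    nlinarith [mul_le_mul_of_nonneg_left h₂ hc, mul_le_mul_of_nonneg_right hK hNuk]
  have hmin : min 1 β * (u ^ 2 + k ^ 2) ≤ u ^ 2 + β * k ^ 2 := by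
    have := min_le_left 1 β
    have := min_le_right 1 β
    nlinarith [sq_nonneg u, sq_nonneg k]
  have hsum : u + k ≤ 2 * ((1 + K) * N) / min 1 β :=
    add_le_of_mul_sq_add_sq_le (norm_nonneg _) (norm_nonneg _) (lt_min one_pos hβ)
      (mul_nonneg (by linarith [mul_nonneg hc (norm_nonneg A)]) (norm_nonneg _))
      (by linarith)
  have hfst : ‖z.1‖ ≤ u + N :=
    (norm_le_insert' z.1 (P z.1)).trans (by gcongr; exact norm_sub_projection_le_norm_newtonOp hP z)
  calc ‖z‖ ≤ u + k + N := max_le (by linarith [norm_nonneg z.2])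
        (show k ≤ u + k + N by linarith [norm_nonneg (P z.1), norm_nonneg (newtonOp P A β c z)])
    _ ≤ 2 * ((1 + K) * N) / min 1 β + N := by linarith
    _ = (2 * (1 + K) / min 1 β + 1) * N := by ring

end NewtonOperator

section MethodOfContinuity

variable {Y : Type*} [NormedAddCommGroup Y] [NormedSpace ℝ Y] [CompleteSpace Y]
  {a b : Y →L[ℝ] Y} {C : ℝ}

theorem isUnit_of_norm_sub_lt_of_norm_le_mul_norm (hC : 0 < C) (ha : IsUnit a)
    (haC : ∀ z, ‖z‖ ≤ C * ‖a z‖) (hb : ‖b - a‖ < C⁻¹) : IsUnit b := by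
  nontriviality Y →L[ℝ] Y
  obtain ⟨u, rfl⟩ := ha
  have hinv : ‖(↑u⁻¹ : Y →L[ℝ] Y)‖ ≤ C :=
    ContinuousLinearMap.opNorm_le_bound _ hC.le fun z => by
      simpa [← mul_apply_eq_comp] using haC ((↑u⁻¹ : Y →L[ℝ] Y) z)
  exact (u.ofNearby b (hb.trans_le (inv_anti₀ (Units.norm_pos u⁻¹) hinv))).isUnit

/-- The method of continuity, in steps of length less than `(C ‖b‖)⁻¹`. -/
theorem isUnit_add_of_norm_le_mul_norm_add_smul (hC : 0 < C) (ha : IsUnit a)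
    (hab : ∀ s ∈ Set.Icc (0 : ℝ) 1, ∀ z, ‖z‖ ≤ C * ‖(a + s • b) z‖) : IsUnit (a + b) := by
  obtain ⟨n, hn⟩ := exists_nat_gt (C * ‖b‖)
  have hn0 : (0 : ℝ) < n := (by positivity : 0 ≤ C * ‖b‖).trans_lt hn
  have hstep : ∀ k ≤ n, IsUnit (a + ((k : ℝ) / n) • b) := by
    intro k
    induction k with
    | zero => simpa using ha
    | succ k ih =>
      intro hk
      have hk' : (k : ℝ) / n ∈ Set.Icc (0 : ℝ) 1 :=
        ⟨by positivity, div_le_one_of_le₀ (by exact_mod_cast (Nat.le_succ k).trans hk) hn0.le⟩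
      refine isUnit_of_norm_sub_lt_of_norm_le_mul_norm hC (ih (by omega)) (hab _ hk') ?_
      rw [add_sub_add_left_eq_sub, ← sub_smul, Nat.cast_succ, add_div, add_sub_cancel_left,
        norm_smul, Real.norm_eq_abs, abs_of_pos (by positivity), one_div, inv_mul_lt_iff₀ hn0,
        lt_mul_inv_iff₀ hC]
      linarith
  simpa [hn0.ne'] using hstep n le_rfl

end MethodOfContinuity

theorem eq_newtonOp_diagIndicator {α ι : Type*} [MeasurableSpace α] [Fintype ι] [DecidableEq ι]
    {μ : Measure α} {E : ι → Set α} (hE : ∀ i, MeasurableSet (E i))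
    {A D : Lp (EuclideanSpace ℝ ι) 2 μ × EuclideanSpace ℝ ι →L[ℝ]
      Lp (EuclideanSpace ℝ ι) 2 μ × EuclideanSpace ℝ ι} {β c : ℝ}
    (hD₁ : ∀ z, ∀ᵐ t ∂μ, ∀ i,
      (D z).1 t i = z.1 t i + c * (E i).indicator (fun _ => (1 : ℝ)) t * (A z).1 t i)
    (hD₂ : ∀ z, (D z).2 = β • z.2 + c • (A z).2) :
    D = newtonOp (Lp.pointwiseCLM 2 (measurable_diagIndicator hE).aestronglyMeasurable
      (norm_diagIndicator_le E)) A β c := by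
  have hL := (measurable_diagIndicator hE).aestronglyMeasurable (μ := μ)
  refine ContinuousLinearMap.ext fun z => Prod.ext (Lp.ext ?_) (hD₂ z)
  set P := Lp.pointwiseCLM 2 hL (norm_diagIndicator_le E)
  filter_upwards [hD₁ z, Lp.coeFn_add z.1 (c • P (A z).1), Lp.coeFn_smul c (P (A z).1),
    Lp.coeFn_pointwiseCLM hL (norm_diagIndicator_le E) (A z).1] with t hD hadd hsmul hP
  ext i
  rw [hD i, newtonOp_apply_fst, hadd, Pi.add_apply, hsmul, Pi.smul_apply, hP]
  simp only [PiLp.add_apply, PiLp.smul_apply, diagIndicator_apply, smul_eq_mul]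
  ring

theorem newton_derivative_bijective_and_uniformly_bounded_inverse_general
    (T : ℝ) (m : ℕ)
    (γ κ M : ℝ) (hγ : 0 < γ) (hκ : 0 < κ) (hM : 0 ≤ M) :
    ∃ C > (0 : ℝ), ∀ A : Xsp T m →L[ℝ] Xsp T m,
      (∀ z w : Xsp T m,
        ⟪(A z).1, w.1⟫ + ⟪(A z).2, w.2⟫ = ⟪z.1, (A w).1⟫ + ⟪z.2, (A w).2⟫) →
      (∀ z : Xsp T m, 0 ≤ ⟪(A z).1, z.1⟫ + ⟪(A z).2, z.2⟫) →
      ‖A‖ ≤ M →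
      ∀ E : Fin m → Set ℝ, (∀ i, MeasurableSet (E i)) → (∀ i, E i ⊆ Set.Ioo 0 T) →
      ∀ D : Xsp T m →L[ℝ] Xsp T m,
        (∀ z : Xsp T m, ∀ᵐ t ∂(volume.restrict (Set.Ioo 0 T)), ∀ i,
          (D z).1 t i = z.1 t i + γ⁻¹ * (E i).indicator (fun _ => (1 : ℝ)) t * (A z).1 t i) →
        (∀ z : Xsp T m, (D z).2 = (κ / γ) • z.2 + γ⁻¹ • (A z).2) →
        Function.Bijective D ∧ ∀ z : Xsp T m, ‖z‖ ≤ C * ‖D z‖ := by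
  have hC : 0 < 2 * (1 + M / γ) / min 1 (κ / γ) + 1 := by positivity
  refine ⟨_, hC, fun A _ hA hAM E hE _ D hD₁ hD₂ => ?_⟩
  have hL := (measurable_diagIndicator hE).aestronglyMeasurable (μ := volume.restrict (Set.Ioo 0 T))
  set P := Lp.pointwiseCLM 2 hL (norm_diagIndicator_le E)
  have hP := Lp.isSymmetricProjection_pointwiseCLM hL (norm_diagIndicator_le E)
    (isSymmetricProjection_diagIndicator E)
  have hbound : ∀ s ∈ Set.Icc (0 : ℝ) 1, ∀ z, ‖z‖ ≤ (2 * (1 + M / γ) / min 1 (κ / γ) + 1) *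
      ‖(newtonOp P A (κ / γ) 0 + s • (newtonOp P A (κ / γ) γ⁻¹ - newtonOp P A (κ / γ) 0)) z‖ := by
    intro s hs z
    rw [← newtonOp_mul]
    refine norm_le_mul_norm_newtonOp hP hA (div_pos hκ hγ) (by have := hs.1; positivity) ?_ z
    calc s * γ⁻¹ * ‖A‖ ≤ 1 * γ⁻¹ * M := by gcongr; exact hs.2
      _ = M / γ := by ring
  have hunit := isUnit_add_of_norm_le_mul_norm_add_smul hC
    (isUnit_newtonOp_zero (div_pos hκ hγ).ne') hbound
  rw [add_sub_cancel] at hunit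
  rw [eq_newtonOp_diagIndicator hE hD₁ hD₂]
  exact ⟨ContinuousLinearMap.isUnit_iff_bijective.mp hunit,
    by simpa using hbound 1 ⟨zero_le_one, le_rfl⟩⟩

/-- Surjectivity (indeed bijectivity) of the Newton derivative `D = DF_γ(v,c)` for `κ > 0`,
together with a bound on `‖D⁻¹‖` depending only on `γ`, `κ` and (a bound `M` on) `‖A‖`,
uniform over all choices of active sets `E₁,…,E_m`. -/
theorem newton_derivative_bijective_and_uniformly_bounded_inverse
    (T : ℝ) (hT : 0 < T) (m : ℕ) (hm : 1 ≤ m)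
    (γ κ M : ℝ) (hγ : 0 < γ) (hκ : 0 < κ) (hM : 0 ≤ M) :
    ∃ C > (0 : ℝ), ∀ A : Xsp T m →L[ℝ] Xsp T m,
      (∀ z w : Xsp T m,
        ⟪(A z).1, w.1⟫ + ⟪(A z).2, w.2⟫ = ⟪z.1, (A w).1⟫ + ⟪z.2, (A w).2⟫) →
      (∀ z : Xsp T m, 0 ≤ ⟪(A z).1, z.1⟫ + ⟪(A z).2, z.2⟫) →
      ‖A‖ ≤ M →
      ∀ E : Fin m → Set ℝ, (∀ i, MeasurableSet (E i)) → (∀ i, E i ⊆ Set.Ioo 0 T) →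
      ∀ D : Xsp T m →L[ℝ] Xsp T m,
        (∀ z : Xsp T m, ∀ᵐ t ∂(volume.restrict (Set.Ioo 0 T)), ∀ i,
          (D z).1 t i = z.1 t i + γ⁻¹ * (E i).indicator (fun _ => (1 : ℝ)) t * (A z).1 t i) →
        (∀ z : Xsp T m, (D z).2 = (κ / γ) • z.2 + γ⁻¹ • (A z).2) →
        Function.Bijective D ∧ ∀ z : Xsp T m, ‖z‖ ≤ C * ‖D z‖ :=
  newton_derivative_bijective_and_uniformly_bounded_inverse_general T m γ κ M hγ hκ hM
end
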